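/- For every integer m > 1, the number (P_{2m} + 2m)/4 is an integer and b((P_{2m} + 2m)/4) − a((P_{2m} + 2m)/4) = a(m). -/

import Mathlib

/-- `a n` is the `n`-th positive integer `k` (1-indexed, in increasing order) such that
the fractional part `{k·√2}` is less than `1/2`. -/
noncomputable def a (n : ℕ) : ℕ :=
  Nat.nth (fun k => 0 < k ∧ Int.fract ((k : ℝ) * Real.sqrt 2) < 1 / 2) (n - 1)

/-- `b n` is the `n`-th positive integer `k` (1-indexed, in increasing order) such that
the fractional part `{k·√2}` is at least `1/2`. -/
noncomputable def b (n : ℕ) : ℕ :=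
  Nat.nth (fun k => 0 < k ∧ 1 / 2 ≤ Int.fract ((k : ℝ) * Real.sqrt 2)) (n - 1)

/-- The Pell numbers: `P 0 = 0`, `P 1 = 1`, `P (n+2) = 2·P (n+1) + P n`. -/
def pell : ℕ → ℕ
  | 0 => 0
  | 1 => 1
  | n + 2 => 2 * pell (n + 1) + pell n

/-!
Let `β = √2 - 1`, let `Q` be the half-companion Pell numbers, so that `Q n - P n √2 = (-β)^n`,
and let `H = P (2m) / 2`. Then `{H √2} = 1/2 - β^(2m)/2`. The convergents `Q n / P n` are best
approximations of `√2`: writing `(K, J)` in the unimodular basis `(P (2m), Q (2m))`,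
`(P (2m+1), Q (2m+1))` shows that `K √2 - J ∉ [0, β^(2m))` for `0 < K < 2 P (2m+1)`,
`K ≠ P (2m+1)`. Applied to `(k, ⌊k√2⌋)` and `(2k, 2⌊k√2⌋ + 1)` this keeps `{k√2}` out of
`[0, β^(2m)/2) ∪ [1/2, 1/2 + β^(2m)/2)` for `0 < k < P (2m+1)`, so adding `H√2` swaps the
two sequences: `H + k` is an `a`-term iff `k` is a `b`-term. Counting with this shift gives, by
induction on `m`, that there are `(P (2m+1) - 1)/2` terms of `a` below `P (2m+1)` and
`(P (2m) + 2m)/4 - 1` below `H`. Hence `H = a n` for `n = (P (2m) + 2m)/4`, and `b n = H + a m`.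
-/

def halfCompanionPell : ℕ → ℕ
  | 0 => 1
  | 1 => 1
  | n + 2 => 2 * halfCompanionPell (n + 1) + halfCompanionPell n

theorem pell_succ_and_halfCompanionPell_succ (n : ℕ) :
    pell (n + 1) = pell n + halfCompanionPell n ∧
      halfCompanionPell (n + 1) = halfCompanionPell n + 2 * pell n := by
  induction n with
  | zero => simp [pell, halfCompanionPell]
  | succ n ih => simp only [pell, halfCompanionPell]; omega

theorem pell_succ (n : ℕ) : pell (n + 1) = pell n + halfCompanionPell n :=
  (pell_succ_and_halfCompanionPell_succ n).1

theorem halfCompanionPell_succ (n : ℕ) :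
    halfCompanionPell (n + 1) = halfCompanionPell n + 2 * pell n :=
  (pell_succ_and_halfCompanionPell_succ n).2

theorem pell_mod_two : ∀ n, pell n % 2 = n % 2
  | 0 => rfl
  | 1 => rfl
  | n + 2 => by have := pell_mod_two n; simp only [pell]; omega

theorem halfCompanionPell_mod_two (n : ℕ) : halfCompanionPell n % 2 = 1 := by
  induction n with
  | zero => rfl
  | succ n ih => rw [halfCompanionPell_succ]; omega

theorem pell_strictMono : StrictMono pell :=
  strictMono_nat_of_lt_succ fun n => by
    have := halfCompanionPell_mod_two n
    rw [pell_succ]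
    omega

theorem halfCompanionPell_sq_sub_two_mul_pell_sq (n : ℕ) :
    (halfCompanionPell n : ℤ) ^ 2 - 2 * (pell n : ℤ) ^ 2 = (-1) ^ n := by
  induction n with
  | zero => simp [pell, halfCompanionPell]
  | succ n ih =>
    rw [pell_succ, halfCompanionPell_succ, pow_succ]
    push_cast
    linear_combination -ih

theorem halfCompanionPell_sub_pell_mul_sqrt_two (n : ℕ) :
    (halfCompanionPell n : ℝ) - pell n * √2 = (1 - √2) ^ n := by
  induction n with
  | zero => simp [pell, halfCompanionPell]
  | succ n ih =>
    rw [pell_succ, halfCompanionPell_succ, pow_succ, ← ih]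
    push_cast
    linear_combination -(pell n : ℝ) * Real.sq_sqrt zero_le_two

theorem sqrt_two_sub_one_pos : 0 < √2 - 1 := sub_pos.2 Real.one_lt_sqrt_two

theorem sqrt_two_sub_one_lt_half : √2 - 1 < 1 / 2 := by
  linarith [Real.sqrt_two_lt_three_halves]

theorem halfCompanionPell_sub_pell_mul_sqrt_two_even (m : ℕ) :
    (halfCompanionPell (2 * m) : ℝ) - pell (2 * m) * √2 = (√2 - 1) ^ (2 * m) := by
  rw [halfCompanionPell_sub_pell_mul_sqrt_two, ← neg_sub, Even.neg_pow (even_two_mul m)]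

theorem pell_mul_sqrt_two_sub_halfCompanionPell_odd (m : ℕ) :
    (pell (2 * m + 1) : ℝ) * √2 - halfCompanionPell (2 * m + 1) = (√2 - 1) ^ (2 * m + 1) := by
  rw [← neg_sub, halfCompanionPell_sub_pell_mul_sqrt_two, ← neg_sub,
    Odd.neg_pow (odd_two_mul_add_one m), neg_neg]

theorem one_le_mul_sub_of_lt_two_mul {β : ℝ} (hβ₀ : 0 < β) (hβ : β < 1 / 2) {u v P P' : ℤ}
    (hP : 0 ≤ P) (hK₀ : 0 < u * P + v * P') (hK : u * P + v * P' < 2 * P')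
    (hne : u * P + v * P' ≠ P') (h : (u : ℝ) ≤ v * β) : 1 ≤ v * β - u := by
  rcases lt_trichotomy u 0 with hu | rfl | hu
  · have hv : 0 < v := by
      by_contra! hv
      nlinarith
    have : (1 : ℝ) ≤ -u := by exact_mod_cast (by omega : (1 : ℤ) ≤ -u)
    have : (0 : ℝ) < v := by exact_mod_cast hv
    nlinarith
  · have hv₀ : 0 < v := by
      by_contra! hv
      nlinarith
    have hv : v < 2 := by
      by_contra! hv
      nlinarith
    obtain rfl : v = 1 := by omega
    simp at hne
  · have hv : 3 ≤ v := by
      by_contra! hv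
      have : (v : ℝ) ≤ 2 := by exact_mod_cast (by omega : v ≤ 2)
      have : (1 : ℝ) ≤ u := by exact_mod_cast hu
      nlinarith
    nlinarith

theorem pow_le_mul_sqrt_two_sub (m : ℕ) {K J : ℤ} (hK₀ : 0 < K)
    (hK : K < 2 * pell (2 * m + 1)) (hne : K ≠ pell (2 * m + 1)) (hJ : J ≤ K * √2) :
    (√2 - 1) ^ (2 * m) ≤ K * √2 - J := by
  set P : ℤ := (pell (2 * m) : ℤ)
  set P' : ℤ := (pell (2 * m + 1) : ℤ)
  set Q : ℤ := (halfCompanionPell (2 * m) : ℤ)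
  set Q' : ℤ := (halfCompanionPell (2 * m + 1) : ℤ)
  have hdet : Q * P' - P * Q' = 1 := by
    have := halfCompanionPell_sq_sub_two_mul_pell_sq (2 * m)
    simp only [P, P', Q, Q', pell_succ, halfCompanionPell_succ, Even.neg_one_pow (even_two_mul m)]
      at this ⊢
    push_cast
    linear_combination this
  set u := J * P' - K * Q'
  set v := K * Q - J * P
  have hKuv : K = u * P + v * P' := by linear_combination (-K) * hdet
  have hJuv : J = u * Q + v * Q' := by linear_combination (-J) * hdet
  have hδ : 0 < (√2 - 1) ^ (2 * m) := pow_pos sqrt_two_sub_one_pos _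
  have hsplit : K * √2 - J = (v * (√2 - 1) - u) * (√2 - 1) ^ (2 * m) := by
    have h := halfCompanionPell_sub_pell_mul_sqrt_two_even m
    have h' := pell_mul_sqrt_two_sub_halfCompanionPell_odd m
    rw [pow_succ] at h'
    rw [hKuv, hJuv]
    push_cast
    linear_combination (-(u : ℝ)) * h + (v : ℝ) * h'
  have hP : 0 ≤ P := by positivity
  rw [hsplit]
  refine le_mul_of_one_le_left hδ.le
    (one_le_mul_sub_of_lt_two_mul sqrt_two_sub_one_pos sqrt_two_sub_one_lt_half hP
      (hKuv ▸ hK₀) (hKuv ▸ hK) (hKuv ▸ hne) ?_)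
  nlinarith

theorem fract_add_lt_half_iff {x y d : ℝ} (hx : Int.fract x = 1 / 2 - d) (hd : 0 ≤ d)
    (hy : d ≤ Int.fract y) (hy' : 1 / 2 ≤ Int.fract y → 1 / 2 + d ≤ Int.fract y) :
    Int.fract (x + y) < 1 / 2 ↔ 1 / 2 ≤ Int.fract y := by
  have hfloor := add_add_add_comm (Int.fract x) (⌊x⌋ : ℝ) (Int.fract y) ⌊y⌋
  rw [Int.fract_add_floor, Int.fract_add_floor] at hfloor
  have hy₁ := Int.fract_lt_one y
  rcases lt_or_ge (Int.fract y) (1 / 2) with h | h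
  · have : Int.fract (x + y) = Int.fract x + Int.fract y :=
      Int.fract_eq_iff.2 ⟨by linarith, by linarith, ⌊x⌋ + ⌊y⌋, by push_cast; linarith⟩
    simp only [this, hx]
    constructor <;> intro <;> linarith
  · have : Int.fract (x + y) = Int.fract x + Int.fract y - 1 :=
      Int.fract_eq_iff.2 ⟨by linarith [hy' h], by linarith, ⌊x⌋ + ⌊y⌋ + 1, by push_cast; linarith⟩
    simp only [this, hx, h, iff_true]
    linarith

def IsATerm (k : ℕ) : Prop := 0 < k ∧ Int.fract ((k : ℝ) * Real.sqrt 2) < 1 / 2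

def IsBTerm (k : ℕ) : Prop := 0 < k ∧ 1 / 2 ≤ Int.fract ((k : ℝ) * Real.sqrt 2)

-- Built with `inferInstanceAs` so as to agree definitionally with the instance found for the
-- unfolded predicates inside `a` and `b`.
noncomputable instance : DecidablePred IsATerm := fun k =>
  inferInstanceAs (Decidable (0 < k ∧ Int.fract ((k : ℝ) * Real.sqrt 2) < 1 / 2))

noncomputable instance : DecidablePred IsBTerm := fun k =>
  inferInstanceAs (Decidable (0 < k ∧ 1 / 2 ≤ Int.fract ((k : ℝ) * Real.sqrt 2)))

theorem not_isATerm_zero : ¬ IsATerm 0 := fun h => h.1.false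

theorem isBTerm_iff {k : ℕ} : IsBTerm k ↔ 0 < k ∧ ¬ IsATerm k := by
  simp only [IsBTerm, IsATerm, not_and, not_lt]
  exact ⟨fun h => ⟨h.1, fun _ => h.2⟩, fun h => ⟨h.1, h.2 h.1⟩⟩

theorem count_isBTerm_add_count_isATerm {N : ℕ} (hN : 0 < N) :
    Nat.count IsBTerm N + Nat.count IsATerm N + 1 = N := by
  induction N with
  | zero => omega
  | succ N ih =>
    rcases Nat.eq_zero_or_pos N with rfl | hN₀
    · simp [Nat.count_succ, not_isATerm_zero, isBTerm_iff]
    · have := ih hN₀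
      by_cases h : IsATerm N <;>
        simp only [Nat.count_succ, isBTerm_iff, hN₀, h, not_true_eq_false, not_false_eq_true,
          and_false, and_self, ↓reduceIte, add_zero] <;> omega

theorem two_dvd_pell_two_mul (m : ℕ) : 2 ∣ pell (2 * m) :=
  Nat.dvd_of_mod_eq_zero (by rw [pell_mod_two]; omega)

theorem fract_mul_sqrt_two_of_pell_eq_two_mul {m H : ℕ} (hH : pell (2 * m) = 2 * H) :
    Int.fract ((H : ℝ) * √2) = 1 / 2 - (√2 - 1) ^ (2 * m) / 2 := by
  have hP : (pell (2 * m) : ℝ) = 2 * H := by exact_mod_cast hH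
  have hQ : (halfCompanionPell (2 * m) : ℝ) = 2 * (halfCompanionPell (2 * m) / 2 : ℕ) + 1 := by
    have := halfCompanionPell_mod_two (2 * m)
    exact_mod_cast (by omega : halfCompanionPell (2 * m) = 2 * (halfCompanionPell (2 * m) / 2) + 1)
  have h := halfCompanionPell_sub_pell_mul_sqrt_two_even m
  have hδ₀ : 0 < (√2 - 1) ^ (2 * m) := pow_pos sqrt_two_sub_one_pos _
  have hδ₁ : (√2 - 1) ^ (2 * m) ≤ 1 :=
    pow_le_one₀ sqrt_two_sub_one_pos.le (by linarith [sqrt_two_sub_one_lt_half])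
  refine Int.fract_eq_iff.2
    ⟨by linarith, by linarith, ((halfCompanionPell (2 * m) / 2 : ℕ) : ℤ), ?_⟩
  rw [Int.cast_natCast]
  linear_combination (-1 / 2 : ℝ) * h + (1 / 2 : ℝ) * hQ - (√2 / 2) * hP

section HalfPell

variable {m H : ℕ} (hH : pell (2 * m) = 2 * H)
include hH

theorem isATerm_of_pell_eq_two_mul (hm : 0 < m) : IsATerm H := by
  have := pell_strictMono (by omega : 1 < 2 * m)
  refine ⟨by simp only [pell] at this; omega, ?_⟩
  rw [fract_mul_sqrt_two_of_pell_eq_two_mul hH]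
  linarith [pow_pos sqrt_two_sub_one_pos (2 * m)]

theorem isATerm_add_iff_of_pell_eq_two_mul {k : ℕ} (hk₀ : 0 < k) (hk : k < pell (2 * m + 1)) :
    IsATerm (H + k) ↔ ¬ IsATerm k := by
  have hodd : pell (2 * m + 1) % 2 = 1 := by rw [pell_mod_two]; omega
  set x := (k : ℝ) * √2
  have hfloor := Int.floor_le x
  have hfract := Int.self_sub_floor x
  have hlow : (√2 - 1) ^ (2 * m) ≤ Int.fract x := by
    have := pow_le_mul_sqrt_two_sub m (K := k) (J := ⌊x⌋) (by exact_mod_cast hk₀)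
      (by omega) (by omega) (by exact_mod_cast hfloor)
    push_cast at this
    linarith
  -- `{k√2} ≥ 1/2` means that `2⌊k√2⌋ + 1` lies below `2k√2`; `2k ≠ P (2m+1)` by parity
  have hhigh (h : 1 / 2 ≤ Int.fract x) : 1 / 2 + (√2 - 1) ^ (2 * m) / 2 ≤ Int.fract x := by
    have := pow_le_mul_sqrt_two_sub m (K := 2 * k) (J := 2 * ⌊x⌋ + 1) (by omega) (by omega)
      (by omega) (by push_cast; linarith)
    push_cast at this
    linarith
  have hδ := pow_pos sqrt_two_sub_one_pos (2 * m)
  have key := fract_add_lt_half_iff (fract_mul_sqrt_two_of_pell_eq_two_mul hH) (by positivity)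
    (by linarith) hhigh
  simp only [IsATerm, Nat.cast_add, add_mul, not_and, not_lt]
  rw [key]
  exact ⟨fun h _ => h.2, fun h => ⟨by omega, h hk₀⟩⟩

theorem count_isATerm_add_of_pell_eq_two_mul (hm : 0 < m) {c : ℕ} (hc : c ≤ pell (2 * m + 1)) :
    Nat.count IsATerm (H + c) + Nat.count IsATerm c = Nat.count IsATerm H + c := by
  induction c with
  | zero => simp
  | succ c ih =>
    have := ih (by omega)
    rw [← add_assoc, Nat.count_succ, Nat.count_succ]
    rcases Nat.eq_zero_or_pos c with rfl | hc₀
    · simp [isATerm_of_pell_eq_two_mul hH hm, not_isATerm_zero]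
    · have hflip := isATerm_add_iff_of_pell_eq_two_mul hH hc₀ (by omega)
      by_cases h : IsATerm c <;>
        simp only [hflip, h, not_true_eq_false, not_false_eq_true, ↓reduceIte, add_zero] <;> omega

end HalfPell

theorem two_mul_count_isATerm_pell_odd (m : ℕ) :
    2 * Nat.count IsATerm (pell (2 * m + 1)) + 1 = pell (2 * m + 1) := by
  induction m with
  | zero => simp [pell, Nat.count_succ, not_isATerm_zero]
  | succ m ih =>
    obtain ⟨H, hH⟩ := two_dvd_pell_two_mul (m + 1)
    set y := pell (2 * m + 1)
    have hy : pell (2 * (m + 1) + 1) = 4 * H + y := by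
      have : pell (2 * (m + 1) + 1) = 2 * pell (2 * (m + 1)) + y := rfl
      omega
    -- reach `4H + y` from `y` in four shifts by `H`
    have shift (c : ℕ) (hc : c ≤ 4 * H + y) :=
      count_isATerm_add_of_pell_eq_two_mul hH (by omega) (c := c) (hy ▸ hc)
    have h₁ := shift y (by omega)
    have h₂ := shift (H + y) (by omega)
    have h₃ := shift (2 * H + y) (by omega)
    have h₄ := shift (3 * H + y) (by omega)
    rw [show H + (H + y) = 2 * H + y by ring] at h₂
    rw [show H + (2 * H + y) = 3 * H + y by ring] at h₃
    rw [show H + (3 * H + y) = 4 * H + y by ring] at h₄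
    rw [hy]
    omega

theorem four_mul_count_isATerm_of_pell_eq_two_mul {m H : ℕ} (hm : 0 < m)
    (hH : pell (2 * m) = 2 * H) : 4 * Nat.count IsATerm H + 4 = pell (2 * m) + 2 * m := by
  induction m generalizing H with
  | zero => omega
  | succ m ih =>
    rcases Nat.eq_zero_or_pos m with rfl | hm₀
    · obtain rfl : H = 1 := by simp [pell] at hH; omega
      simp [pell, Nat.count_succ, not_isATerm_zero]
    · obtain ⟨H₀, hH₀⟩ := two_dvd_pell_two_mul m
      have hstep : pell (2 * (m + 1)) = 2 * pell (2 * m + 1) + pell (2 * m) := rfl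
      obtain rfl : H = H₀ + pell (2 * m + 1) := by omega
      have := count_isATerm_add_of_pell_eq_two_mul hH₀ hm₀ le_rfl
      have := two_mul_count_isATerm_pell_odd m
      have := ih hm₀ hH₀
      omega

theorem le_count_isATerm_pell_odd (m : ℕ) : m ≤ Nat.count IsATerm (pell (2 * m + 1)) := by
  have := two_mul_count_isATerm_pell_odd m
  have : 2 * m + 1 ≤ pell (2 * m + 1) := pell_strictMono.id_le (2 * m + 1)
  omega

theorem a_pell_add_div_four {m H : ℕ} (hm : 0 < m) (hH : pell (2 * m) = 2 * H) :
    a ((pell (2 * m) + 2 * m) / 4) = H := by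
  have := four_mul_count_isATerm_of_pell_eq_two_mul hm hH
  change Nat.nth IsATerm _ = H
  rw [show (pell (2 * m) + 2 * m) / 4 - 1 = Nat.count IsATerm H by omega]
  exact Nat.nth_count (isATerm_of_pell_eq_two_mul hH hm)

theorem b_pell_add_div_four {m H : ℕ} (hm : 0 < m) (hH : pell (2 * m) = 2 * H) :
    b ((pell (2 * m) + 2 * m) / 4) = H + a m := by
  have hlt : m - 1 < Nat.count IsATerm (pell (2 * m + 1)) := by
    have := le_count_isATerm_pell_odd m
    omega
  have hfin (hf : (Set.ofPred IsATerm).Finite) :=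
    hlt.trans_le (Nat.count_le_card (p := IsATerm) hf _)
  have ham : IsATerm (a m) := Nat.nth_mem _ hfin
  have hcount_am : Nat.count IsATerm (a m) = m - 1 := Nat.count_nth (p := IsATerm) hfin
  have ham_lt : a m < pell (2 * m + 1) := Nat.nth_lt_of_lt_count hlt
  have hpos : 0 < H + a m := Nat.add_pos_right H ham.1
  have hbH : IsBTerm (H + a m) := isBTerm_iff.2
    ⟨hpos, fun h => (isATerm_add_iff_of_pell_eq_two_mul hH ham.1 ham_lt).1 h ham⟩
  have := count_isATerm_add_of_pell_eq_two_mul hH hm ham_lt.le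
  have := count_isBTerm_add_count_isATerm hpos
  have := four_mul_count_isATerm_of_pell_eq_two_mul hm hH
  change Nat.nth IsBTerm _ = _
  rw [show (pell (2 * m) + 2 * m) / 4 - 1 = Nat.count IsBTerm (H + a m) by omega]
  exact Nat.nth_count hbH

theorem stmt_17 (m : ℕ) (hm : 1 < m) :
    4 ∣ pell (2 * m) + 2 * m ∧
    (b ((pell (2 * m) + 2 * m) / 4) : ℤ) - (a ((pell (2 * m) + 2 * m) / 4) : ℤ) = a m := by
  have hm₀ : 0 < m := by omega
  obtain ⟨H, hH⟩ := two_dvd_pell_two_mul m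
  have := four_mul_count_isATerm_of_pell_eq_two_mul hm₀ hH
  refine ⟨⟨Nat.count IsATerm H + 1, by omega⟩, ?_⟩
  rw [b_pell_add_div_four hm₀ hH, a_pell_add_div_four hm₀ hH]
  push_cast
  ring
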